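/- Let n be a natural number, p ≥ 1 a real number, a : Fin n → ℝ a family of nonnegative real numbers (the ages of n transactions), and c : Fin n → ℝ a nonnegative monotone nondecreasing family (the cumulative completion offsets of the n scheduling positions). Let σ be a permutation of Fin n such that a ∘ σ is antitone (i.e., it schedules transactions in nonincreasing order of age, eldest first). Then for every permutation τ of Fin n, ∑ᵢ (a(σ(i)) + c(i))^p ≤ ∑ᵢ (a(τ(i)) + c(i))^p. -/
import Mathlib

open Finset

private lemma supermod {p : ℝ} (hp : 1 ≤ p) {A x y B : ℝ} (hA : 0 ≤ A)
    (hAx : A ≤ x) (hxB : x ≤ B) (hsum : A + B = x + y) :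
    x ^ p + y ^ p ≤ A ^ p + B ^ p := by
  have hconv := convexOn_rpow hp
  rcases eq_or_lt_of_le (hAx.trans hxB) with h | hAB
  · have hx : x = A := le_antisymm (h ▸ hxB) hAx
    have hy : y = B := by linarith
    rw [hx, hy]
  · set l : ℝ := (B - x) / (B - A) with hl
    have hBA : 0 < B - A := by linarith
    have hl0 : 0 ≤ l := div_nonneg (by linarith) hBA.le
    have hl1 : l ≤ 1 := (div_le_one hBA).2 (by linarith)
    have hlBA : l * (B - A) = B - x := div_mul_cancel₀ _ hBA.ne'
    have hxeq : x = l * A + (1 - l) * B := by linear_combination hlBA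
    have hyeq : y = (1 - l) * A + l * B := by
      have : y = A + B - x := by linarith
      rw [this, hxeq]; ring
    have hAm : A ∈ Set.Ici (0:ℝ) := hA
    have hBm : B ∈ Set.Ici (0:ℝ) := by simp only [Set.mem_Ici]; linarith
    have h1 := hconv.2 hAm hBm hl0 (show (0:ℝ) ≤ 1 - l by linarith) (by ring)
    have h2 := hconv.2 hAm hBm (show (0:ℝ) ≤ 1 - l by linarith) hl0 (by ring)
    simp only [smul_eq_mul] at h1 h2
    rw [hxeq, hyeq]
    nlinarith

private lemma key {p : ℝ} (hp : 1 ≤ p) {x y s t : ℝ} (hy : 0 ≤ y) (hs : 0 ≤ s)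
    (hyx : y ≤ x) (hst : s ≤ t) :
    (x + s) ^ p + (y + t) ^ p ≤ (y + s) ^ p + (x + t) ^ p :=
  supermod hp (by linarith) (by linarith) (by linarith) (by ring)

private lemma sum_pair {n : ℕ} {M : Type*} [AddCommMonoid M] {i j : Fin n}
    (hij : i ≠ j) (g : Fin n → M) :
    ∑ x, g x = g i + g j + ∑ x ∈ (univ.erase i).erase j, g x := by
  rw [← Finset.add_sum_erase _ _ (mem_univ i),
    ← Finset.add_sum_erase _ _ (Finset.mem_erase.2 ⟨hij.symm, mem_univ j⟩)]
  rw [add_assoc]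

private lemma main_lemma (n : ℕ) (p : ℝ) (hp : 1 ≤ p)
    (b : Fin n → ℝ) (hb : ∀ i, 0 ≤ b i) (hanti : Antitone b)
    (c : Fin n → ℝ) (hc : ∀ i, 0 ≤ c i) (hmono : Monotone c) :
    ∀ τ : Equiv.Perm (Fin n),
      ∑ i, (b i + c i) ^ p ≤ ∑ i, (b (τ i) + c i) ^ p := by
  have fbound : ∀ τ : Equiv.Perm (Fin n),
      (∑ i, (τ i : ℕ) * (i : ℕ)) ≤ n * n * n := by
    intro τ
    calc ∑ i : Fin n, (τ i : ℕ) * (i : ℕ) ≤ ∑ _i : Fin n, n * n :=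
          Finset.sum_le_sum fun i _ =>
            Nat.mul_le_mul (τ i).isLt.le (i.isLt.le)
      _ = n * n * n := by simp [mul_comm]
  suffices H : ∀ k, ∀ τ : Equiv.Perm (Fin n),
      n * n * n - (∑ i, (τ i : ℕ) * (i : ℕ)) ≤ k →
      ∑ i, (b i + c i) ^ p ≤ ∑ i, (b (τ i) + c i) ^ p by
    intro τ
    exact H (n * n * n) τ (Nat.sub_le _ _)
  intro k
  induction k using Nat.strong_induction_on with
  | _ k ih =>
    intro τ hk
    by_cases hinv : ∃ q : Fin n × Fin n, q.1 < q.2 ∧ τ q.2 < τ q.1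
    · obtain ⟨⟨i, j⟩, hij, hτ⟩ := hinv
      have hne : i ≠ j := ne_of_lt hij
      set τ' : Equiv.Perm (Fin n) := τ * Equiv.swap i j with hτ'
      have hτ'i : τ' i = τ j := by simp [hτ', Equiv.swap_apply_left]
      have hτ'j : τ' j = τ i := by simp [hτ', Equiv.swap_apply_right]
      have hτ'x : ∀ x, x ≠ i → x ≠ j → τ' x = τ x := by
        intro x hxi hxj
        simp [hτ', Equiv.swap_apply_of_ne_of_ne hxi hxj]
      -- measure strictly increases
      have hmeas : (∑ x, (τ x : ℕ) * (x : ℕ)) < ∑ x, (τ' x : ℕ) * (x : ℕ) := by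
        rw [sum_pair hne (fun x => (τ x : ℕ) * (x : ℕ)),
          sum_pair hne (fun x => (τ' x : ℕ) * (x : ℕ))]
        have hrest : ∑ x ∈ (univ.erase i).erase j, (τ' x : ℕ) * (x : ℕ)
            = ∑ x ∈ (univ.erase i).erase j, (τ x : ℕ) * (x : ℕ) := by
          refine Finset.sum_congr rfl fun x hx => ?_
          rw [Finset.mem_erase, Finset.mem_erase] at hx
          rw [hτ'x x hx.2.1 hx.1]
        rw [hτ'i, hτ'j, hrest]
        have h1 : (τ j : ℕ) < τ i := hτ
        have h2 : (i : ℕ) < j := hij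
        nlinarith
      -- cost does not increase
      have hcost : ∑ x, (b (τ' x) + c x) ^ p ≤ ∑ x, (b (τ x) + c x) ^ p := by
        rw [sum_pair hne (fun x => (b (τ' x) + c x) ^ p),
          sum_pair hne (fun x => (b (τ x) + c x) ^ p)]
        have hrest : ∑ x ∈ (univ.erase i).erase j, (b (τ' x) + c x) ^ p
            = ∑ x ∈ (univ.erase i).erase j, (b (τ x) + c x) ^ p := by
          refine Finset.sum_congr rfl fun x hx => ?_
          rw [Finset.mem_erase, Finset.mem_erase] at hx
          rw [hτ'x x hx.2.1 hx.1]
        rw [hτ'i, hτ'j, hrest]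
        have hxy : b (τ i) ≤ b (τ j) := hanti hτ.le
        have := key hp (hb (τ i)) (hc i) hxy (hmono hij.le)
        linarith
      have hle : ∑ i, (b i + c i) ^ p ≤ ∑ x, (b (τ' x) + c x) ^ p := by
        have hb1 := fbound τ'
        refine ih (n * n * n - ∑ x, (τ' x : ℕ) * (x : ℕ)) ?_ τ' le_rfl
        omega
      exact hle.trans hcost
    · push_neg at hinv
      have hmonoτ : Monotone τ := by
        intro x y hxy
        rcases eq_or_lt_of_le hxy with rfl | h
        · exact le_rfl
        · exact hinv (x, y) h
      have hsm : StrictMono τ := hmonoτ.strictMono_of_injective τ.injective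
      have heq : ∀ x, τ x = x := by
        let e : Fin n ≃o Fin n :=
          { toEquiv := τ, map_rel_iff' := fun {x y} => hsm.le_iff_le }
        have he : e = OrderIso.refl (Fin n) := Subsingleton.elim _ _
        intro x
        have h2 := congrArg (fun f => (f : Fin n ≃o Fin n) x) he
        have h3 : e x = x := by simpa using h2
        simpa [e] using h3
      have : ∀ x, τ x = x := heq
      simp [this]

/-- Deterministic core of the VATS optimality theorem: eldest-first scheduling
minimizes the sum of `p`-th powers of latencies. `a i` is the (nonnegative) age
of transaction `i`, `c i` is the nonnegative, monotone nondecreasing cumulative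
completion offset of scheduling position `i`, and a schedule is a permutation
`τ` placing transaction `τ i` in position `i`. -/
theorem vats_deterministic (n : ℕ) (p : ℝ) (hp : 1 ≤ p)
    (a : Fin n → ℝ) (ha : ∀ i, 0 ≤ a i)
    (c : Fin n → ℝ) (hc : ∀ i, 0 ≤ c i) (hmono : Monotone c)
    (σ : Equiv.Perm (Fin n)) (hσ : Antitone (a ∘ σ)) :
    ∀ τ : Equiv.Perm (Fin n),
      ∑ i, (a (σ i) + c i) ^ p ≤ ∑ i, (a (τ i) + c i) ^ p := by
  intro τ
  have := main_lemma n p hp (a ∘ σ) (fun i => ha _) hσ c hc hmono (σ⁻¹ * τ)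
  simpa using this
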